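/- Let b, c be in K((ℝ≤0)) and x ∈ ℝ. If b is principal, c is nonzero, and every element of supp(c) is strictly greater than x, then either the truncation (b·c)_{≤x} is zero or deg((b·c)_{≤x}) < deg(b) ♯ deg(c). -/

import Mathlib

open Ordinal

/-- Natural addition (Hessenberg sum) of ordinals, as formerly defined in Mathlib's
`Mathlib/SetTheory/Ordinal/NaturalOps.lean` (removed from the current library). -/
noncomputable def Ordinal.nadd (a b : Ordinal.{u}) : Ordinal.{u} :=
  max (blsub.{u, u} a fun a' _ => Ordinal.nadd a' b) (blsub.{u, u} b fun b' _ => Ordinal.nadd a b')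
termination_by (a, b)

infixl:65 " ♯ " => Ordinal.nadd

/-- The ordinal order type of a well-ordered subset of a linear order. -/
noncomputable def orderTypeSet {Γ : Type*} [LinearOrder Γ] (s : Set Γ) (hs : s.IsWF) : Ordinal :=
  letI : IsWellFounded s (· < ·) := ⟨hs⟩
  Ordinal.type ((· < ·) : s → s → Prop)

/-- The order type `ot b` of the support of a Hahn series. -/
noncomputable def HahnSeries.ot {Γ : Type*} [LinearOrder Γ] {R : Type*} [Zero R]
    (b : HahnSeries Γ R) : Ordinal :=
  orderTypeSet b.support b.isWF_support

/-- The degree of a Hahn series: the largest ordinal `β` with `ω ^ β ≤ ot b`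
(for a nonzero series), implemented as the base-`ω` ordinal logarithm of `ot b`. -/
noncomputable def HahnSeries.deg {Γ : Type*} [LinearOrder Γ] {R : Type*} [Zero R]
    (b : HahnSeries Γ R) : Ordinal :=
  Ordinal.log Ordinal.omega0 b.ot

/-- A nonzero series is weakly principal if its order type is `ω ^ α` for some ordinal `α`. -/
def weaklyPrincipal {Γ : Type*} [LinearOrder Γ] {R : Type*} [Zero R]
    (b : HahnSeries Γ R) : Prop :=
  ∃ α : Ordinal, b.ot = Ordinal.omega0 ^ α

/-- A series in `K((ℝ≤0))` is principal if it is weakly principal and the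
supremum of its support is `0`. -/
def principalSeries {R : Type*} [Zero R] (b : HahnSeries ℝ R) : Prop :=
  weaklyPrincipal b ∧ sSup b.support = 0

/-- The truncation `b_{≤ x}` of a Hahn series: same coefficients as `b` at
exponents `≤ x`, and coefficient `0` at exponents `> x`. -/
noncomputable def HahnSeries.truncLE {Γ : Type*} [LinearOrder Γ] {R : Type*} [Zero R]
    (b : HahnSeries Γ R) (x : Γ) : HahnSeries Γ R where
  coeff y := if y ≤ x then b.coeff y else 0
  isPWO_support' := b.isPWO_support.mono (fun y hy => by
    simp only [Function.mem_support] at hy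
    by_cases h : y ≤ x
    · simpa [h] using hy
    · simp [h] at hy)

/-! Below `x`, the product `b * c` only sees the part `S = supp b ∩ (-∞, x - min (supp c)]` of
`supp b`, which is a proper initial segment because `sup (supp b) = 0`; hence `ot S < ω ^ deg b`,
while `ot c < ω ^ (deg c + 1)`. The heart of the matter is a bound on sumsets of well-ordered sets:
`ot S ≤ ω ^ a` and `ot T ≤ ω ^ b` give `ot (S + T) ≤ ω ^ (a ♯ b)`. It is proved by induction on
`a ♯ b`: below `s + t` the sumset is covered by `(S_{<s} + T) ∪ (S + T_{<t})`, the order type of a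
union is at most the natural sum of the order types, and each `ω ^ t` is closed under `♯`. A set of
order type `< ω ^ (e + 1)` is a finite concatenation of pieces of order type `≤ ω ^ e`, which
reduces the strict bounds to the inductive hypothesis. -/

open Order Pointwise

namespace Ordinal

theorem lt_nadd_iff {a b c : Ordinal} :
    a < b ♯ c ↔ (∃ b' < b, a ≤ b' ♯ c) ∨ ∃ c' < c, a ≤ b ♯ c' := by
  rw [nadd]
  simp [lt_blsub_iff]

theorem nadd_le_iff {a b c : Ordinal} :
    b ♯ c ≤ a ↔ (∀ b' < b, b' ♯ c < a) ∧ ∀ c' < c, b ♯ c' < a := by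
  rw [nadd]
  simp [blsub_le_iff]

theorem nadd_lt_nadd_left {b c : Ordinal} (h : b < c) (a : Ordinal) : a ♯ b < a ♯ c :=
  lt_nadd_iff.2 (Or.inr ⟨b, h, le_rfl⟩)

theorem nadd_lt_nadd_right {b c : Ordinal} (h : b < c) (a : Ordinal) : b ♯ a < c ♯ a :=
  lt_nadd_iff.2 (Or.inl ⟨b, h, le_rfl⟩)

theorem nadd_le_nadd_left {b c : Ordinal} (h : b ≤ c) (a : Ordinal) : a ♯ b ≤ a ♯ c :=
  h.lt_or_eq.elim (fun h => (nadd_lt_nadd_left h a).le) (fun h => h ▸ le_rfl)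

theorem nadd_le_nadd_right {b c : Ordinal} (h : b ≤ c) (a : Ordinal) : b ♯ a ≤ c ♯ a :=
  h.lt_or_eq.elim (fun h => (nadd_lt_nadd_right h a).le) (fun h => h ▸ le_rfl)

theorem nadd_lt_nadd_of_lt_of_le {a b c d : Ordinal} (h₁ : a < b) (h₂ : c ≤ d) :
    a ♯ c < b ♯ d :=
  (nadd_lt_nadd_right h₁ c).trans_le (nadd_le_nadd_left h₂ b)

theorem nadd_lt_nadd_of_le_of_lt {a b c d : Ordinal} (h₁ : a ≤ b) (h₂ : c < d) :
    a ♯ c < b ♯ d :=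
  (nadd_le_nadd_right h₁ c).trans_lt (nadd_lt_nadd_left h₂ b)

theorem nadd_comm (a b : Ordinal) : a ♯ b = b ♯ a := by
  rw [nadd, nadd, max_comm]
  congr <;> ext <;> apply nadd_comm
termination_by (a, b)

theorem nadd_zero (a : Ordinal) : a ♯ 0 = a := by
  induction a using WellFoundedLT.induction with
  | ind a ih =>
    rw [nadd, blsub_zero, max_eq_left zero_le]
    convert blsub_id a with b hb
    exact ih b hb

theorem natCast_nadd_natCast_le (m n : ℕ) : (m : Ordinal) ♯ n ≤ (m + n : ℕ) := by
  induction m using Nat.strong_induction_on generalizing n with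
  | _ m ihm =>
    induction n using Nat.strong_induction_on with
    | _ n ihn =>
      rw [nadd_le_iff]
      constructor
      · intro a ha
        obtain ⟨k, rfl⟩ := lt_omega0.1 (ha.trans (natCast_lt_omega0 m))
        have hk : k < m := by exact_mod_cast ha
        exact (ihm k hk n).trans_lt (by exact_mod_cast (by omega : k + n < m + n))
      · intro a ha
        obtain ⟨k, rfl⟩ := lt_omega0.1 (ha.trans (natCast_lt_omega0 n))
        have hk : k < n := by exact_mod_cast ha
        exact (ihn k hk).trans_lt (by exact_mod_cast (by omega : m + k < m + n))

theorem nadd_lt_omega0 {u v : Ordinal} (hu : u < ω) (hv : v < ω) : u ♯ v < ω := by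
  obtain ⟨m, rfl⟩ := lt_omega0.1 hu
  obtain ⟨n, rfl⟩ := lt_omega0.1 hv
  exact (natCast_nadd_natCast_le m n).trans_lt (natCast_lt_omega0 _)

theorem mul_div_nadd_add_mod_nadd_lt {W : Ordinal} (hW : IsPrincipal (· ♯ ·) W) (hW0 : W ≠ 0)
    {u' u : Ordinal} (h : u' < u) (p : Ordinal) {z : Ordinal} (hz : z < W) :
    W * (u' / W ♯ p) + (u' % W ♯ z) < W * (u / W ♯ p) + (u % W ♯ z) := by
  rcases (div_le_left h.le W).lt_or_eq with hq | hq
  · calc W * (u' / W ♯ p) + (u' % W ♯ z)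
        < W * (u' / W ♯ p) + W := add_lt_add_right (hW (mod_lt u' hW0) hz) _
      _ = W * succ (u' / W ♯ p) := (mul_succ _ _).symm
      _ ≤ W * (u / W ♯ p) := mul_le_mul_right (succ_le_of_lt (nadd_lt_nadd_right hq p)) W
      _ ≤ _ := le_self_add
  · have hmod : u' % W < u % W := by
      have := div_add_mod u' W ▸ div_add_mod u W ▸ h
      rwa [hq, add_lt_add_iff_left] at this
    rw [hq]
    exact add_lt_add_right (nadd_lt_nadd_right hmod z) _

theorem nadd_le_mul_div_nadd_add_mod_nadd {W : Ordinal} (hW : IsPrincipal (· ♯ ·) W)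
    (hW0 : W ≠ 0) (u v : Ordinal) :
    u ♯ v ≤ W * (u / W ♯ v / W) + (u % W ♯ v % W) := by
  induction u using WellFoundedLT.induction generalizing v with
  | ind u ihu =>
    induction v using WellFoundedLT.induction with
    | ind v ihv =>
      rw [nadd_le_iff]
      constructor
      · intro u' hu'
        exact (ihu u' hu' v).trans_lt
          (mul_div_nadd_add_mod_nadd_lt hW hW0 hu' _ (mod_lt v hW0))
      · intro v' hv'
        refine (ihv v' hv').trans_lt ?_
        simpa only [nadd_comm] using mul_div_nadd_add_mod_nadd_lt hW hW0 hv' _ (mod_lt u hW0)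

theorem isPrincipal_nadd_omega0_opow (t : Ordinal) : IsPrincipal (· ♯ ·) (ω ^ t) := by
  induction t using WellFoundedLT.induction with
  | ind t ih =>
    intro u v hu hv
    rcases zero_or_succ_or_isSuccLimit t with rfl | ⟨r, rfl⟩ | ht
    · rw [opow_zero, Order.lt_one_iff] at hu hv
      simp [hu, hv, nadd_zero]
    · have hW0 : ω ^ r ≠ 0 := (opow_pos r omega0_pos).ne'
      have hW := ih r (lt_succ r)
      rw [opow_succ] at hu hv ⊢
      calc u ♯ v ≤ ω ^ r * (u / ω ^ r ♯ v / ω ^ r) + (u % ω ^ r ♯ v % ω ^ r) :=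
            nadd_le_mul_div_nadd_add_mod_nadd hW hW0 u v
        _ < ω ^ r * (u / ω ^ r ♯ v / ω ^ r) + ω ^ r :=
            add_lt_add_right (hW (mod_lt u hW0) (mod_lt v hW0)) _
        _ = ω ^ r * succ (u / ω ^ r ♯ v / ω ^ r) := (mul_succ _ _).symm
        _ ≤ ω ^ r * ω := mul_le_mul_right (succ_le_of_lt
            (nadd_lt_omega0 ((lt_mul_iff_div_lt hW0).1 hu) ((lt_mul_iff_div_lt hW0).1 hv))) _
    · obtain ⟨r₁, hr₁, hu⟩ := (lt_opow_of_isSuccLimit omega0_ne_zero ht).1 hu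
      obtain ⟨r₂, hr₂, hv⟩ := (lt_opow_of_isSuccLimit omega0_ne_zero ht).1 hv
      have hle₁ := opow_le_opow_right omega0_pos (le_max_left r₁ r₂)
      have hle₂ := opow_le_opow_right omega0_pos (le_max_right r₁ r₂)
      exact (ih _ (max_lt hr₁ hr₂) (hu.trans_le hle₁) (hv.trans_le hle₂)).trans
        ((opow_lt_opow_iff_right one_lt_omega0).2 (max_lt hr₁ hr₂))

theorem exists_le_omega0_opow_mul_of_lt_opow_succ {o e : Ordinal}
    (h : o < ω ^ succ e) : ∃ n : ℕ, o ≤ ω ^ e * n := by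
  have hW0 : ω ^ e ≠ 0 := (opow_pos e omega0_pos).ne'
  rw [opow_succ, lt_mul_iff_div_lt hW0] at h
  obtain ⟨n, hn⟩ := lt_omega0.1 h
  refine ⟨n + 1, (lt_mul_succ_div o hW0).le.trans_eq ?_⟩
  rw [hn, Nat.cast_succ, ← succ_eq_add_one]

end Ordinal

namespace Set

variable {Γ : Type*} [LinearOrder Γ] {s t : Set Γ}

noncomputable def ordType (s : Set Γ) : Ordinal :=
  open Classical in
  if hs : s.IsWF then orderTypeSet s hs else 0

theorem ordType_eq_orderTypeSet (hs : s.IsWF) : s.ordType = orderTypeSet s hs :=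
  dif_pos hs

theorem ordType_eq_type (hs : s.IsWF) [IsWellFounded s (· < ·)] :
    s.ordType = Ordinal.type ((· < ·) : s → s → Prop) :=
  dif_pos hs

theorem ordType_eq_zero (hs : s.IsWF) : s.ordType = 0 ↔ s = ∅ := by
  have : IsWellFounded s (· < ·) := ⟨hs⟩
  rw [ordType_eq_type hs, Ordinal.type_eq_zero_iff_isEmpty, isEmpty_coe_sort]

theorem ordType_empty : (∅ : Set Γ).ordType = 0 :=
  (ordType_eq_zero isWF_empty).2 rfl

theorem ordType_mono (ht : t.IsWF) (hst : s ⊆ t) : s.ordType ≤ t.ordType := by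
  have : IsWellFounded t (· < ·) := ⟨ht⟩
  have : IsWellFounded s (· < ·) := ⟨ht.mono hst⟩
  rw [ordType_eq_type ht, ordType_eq_type (ht.mono hst)]
  exact RelEmbedding.ordinal_type_le ⟨⟨inclusion hst, inclusion_injective hst⟩, Iff.rfl⟩

theorem ordType_inter_Iio (hs : s.IsWF) {w : Γ} (hw : w ∈ s) :
    haveI : IsWellFounded s (· < ·) := ⟨hs⟩
    (s ∩ Iio w).ordType = Ordinal.typein ((· < ·) : s → s → Prop) ⟨w, hw⟩ := by
  have : IsWellFounded s (· < ·) := ⟨hs⟩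
  have : IsWellFounded (s ∩ Iio w : Set Γ) (· < ·) := ⟨hs.mono inter_subset_left⟩
  rw [ordType_eq_type (hs.mono inter_subset_left), ← Ordinal.type_subrel]
  exact RelIso.ordinalType_congr
    { toFun := fun a => ⟨⟨a.1, a.2.1⟩, a.2.2⟩
      invFun := fun b => ⟨b.1.1, b.1.2, b.2⟩
      map_rel_iff' := Iff.rfl }

theorem ordType_inter_Iio_lt (hs : s.IsWF) {w : Γ} (hw : w ∈ s) :
    (s ∩ Iio w).ordType < s.ordType := by
  have : IsWellFounded s (· < ·) := ⟨hs⟩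
  rw [ordType_inter_Iio hs hw, ordType_eq_type hs]
  exact Ordinal.typein_lt_type _ _

theorem exists_ordType_inter_Iio_eq (hs : s.IsWF) {γ : Ordinal} (hγ : γ < s.ordType) :
    ∃ w ∈ s, (s ∩ Iio w).ordType = γ := by
  have : IsWellFounded s (· < ·) := ⟨hs⟩
  rw [ordType_eq_type hs] at hγ
  obtain ⟨w, hw⟩ := Ordinal.typein_surj ((· < ·) : s → s → Prop) hγ
  exact ⟨w.1, w.2, by rw [ordType_inter_Iio hs w.2, ← hw]⟩

theorem ordType_le_of_forall_lt (hs : s.IsWF) {γ : Ordinal}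
    (h : ∀ w ∈ s, (s ∩ Iio w).ordType < γ) : s.ordType ≤ γ := by
  by_contra! hγ
  obtain ⟨w, hw, hwγ⟩ := exists_ordType_inter_Iio_eq hs hγ
  exact (h w hw).ne hwγ

theorem ordType_add_ordType_le_ordType_union (hs : s.IsWF) (ht : t.IsWF)
    (h : ∀ a ∈ s, ∀ b ∈ t, a < b) : s.ordType + t.ordType ≤ (s ∪ t).ordType := by
  have : IsWellFounded s (· < ·) := ⟨hs⟩
  have : IsWellFounded t (· < ·) := ⟨ht⟩
  have : IsWellFounded (s ∪ t : Set Γ) (· < ·) := ⟨hs.union ht⟩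
  rw [ordType_eq_type hs, ordType_eq_type ht, ordType_eq_type (hs.union ht),
    ← Ordinal.type_sum_lex]
  refine RelEmbedding.ordinal_type_le (RelEmbedding.ofMonotone
    (Sum.elim (fun a => ⟨a.1, Or.inl a.2⟩) (fun b => ⟨b.1, Or.inr b.2⟩)) ?_)
  rintro (a | a) (b | b) hab
  · exact (Sum.lex_inl_inl.mp hab : a < b)
  · exact h a.1 a.2 b.1 b.2
  · exact absurd hab Sum.lex_inr_inl
  · exact (Sum.lex_inr_inr.mp hab : a < b)

theorem ordType_union_le {s t : Set Γ} (hs : s.IsWF) (ht : t.IsWF) :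
    (s ∪ t).ordType ≤ s.ordType ♯ t.ordType := by
  refine ordType_le_of_forall_lt (hs.union ht) fun w hw => ?_
  have hlt : (s ∩ Iio w).ordType ♯ (t ∩ Iio w).ordType < s.ordType ♯ t.ordType := by
    rcases hw with hw | hw
    · exact Ordinal.nadd_lt_nadd_of_lt_of_le (ordType_inter_Iio_lt hs hw)
        (ordType_mono ht inter_subset_left)
    · exact Ordinal.nadd_lt_nadd_of_le_of_lt (ordType_mono hs inter_subset_left)
        (ordType_inter_Iio_lt ht hw)
  rw [union_inter_distrib_right]
  exact (ordType_union_le (hs.mono inter_subset_left) (ht.mono inter_subset_left)).trans_lt hlt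
termination_by s.ordType ♯ t.ordType

end Set

namespace Set

variable {Γ : Type*} [AddCommMonoid Γ] [LinearOrder Γ] [IsOrderedCancelAddMonoid Γ]

theorem add_inter_Iio_add_subset (S T : Set Γ) (s t : Γ) :
    (S + T) ∩ Iio (s + t) ⊆ (S ∩ Iio s + T) ∪ (S + T ∩ Iio t) := by
  rintro _ ⟨⟨s', hs', t', ht', rfl⟩, hlt⟩
  rcases lt_or_ge s' s with hs | hs
  · exact Or.inl ⟨s', ⟨hs', hs⟩, t', ht', rfl⟩
  · have ht : t' < t := lt_of_not_ge fun ht => (add_le_add hs ht).not_gt hlt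
    exact Or.inr ⟨s', hs', t', ⟨ht', ht⟩, rfl⟩

theorem ordType_add_lt_of_lt_opow_succ {S T : Set Γ} {e t₀ : Ordinal} (hT : T.IsWF)
    (H : ∀ A : Set Γ, A.IsWF → A.ordType ≤ ω ^ e → (A + T).ordType < ω ^ t₀)
    (hS : S.IsWF) (hSe : S.ordType < ω ^ succ e) : (S + T).ordType < ω ^ t₀ := by
  obtain ⟨n, hn⟩ := exists_le_omega0_opow_mul_of_lt_opow_succ hSe
  clear hSe
  induction n generalizing S with
  | zero =>
    rw [Nat.cast_zero, mul_zero, nonpos_iff_eq_zero, ordType_eq_zero hS] at hn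
    rw [hn, empty_add, ordType_empty]
    exact opow_pos t₀ omega0_pos
  | succ n ih =>
    rcases le_or_gt S.ordType (ω ^ e * n) with hle | hlt
    · exact ih hS hle
    obtain ⟨w, -, hw⟩ := exists_ordType_inter_Iio_eq hS hlt
    have hA : (S ∩ Iio w).IsWF := hS.mono inter_subset_left
    have hB : (S ∩ Ici w).IsWF := hS.mono inter_subset_left
    have hSAB : S = (S ∩ Iio w) ∪ (S ∩ Ici w) := by
      rw [← inter_union_distrib_left, Iio_union_Ici, inter_univ]
    have hBe : (S ∩ Ici w).ordType ≤ ω ^ e := by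
      have hsum := ordType_add_ordType_le_ordType_union hA hB
        fun a ha b hb => ha.2.trans_le hb.2
      rw [← hSAB, hw] at hsum
      rw [← add_le_add_iff_left (ω ^ e * n), ← mul_add_one]
      exact_mod_cast hsum.trans hn
    calc (S + T).ordType
        = (S ∩ Iio w + T ∪ (S ∩ Ici w + T)).ordType := by rw [← union_add, ← hSAB]
      _ ≤ (S ∩ Iio w + T).ordType ♯ (S ∩ Ici w + T).ordType :=
          ordType_union_le (hA.add hT) (hB.add hT)
      _ < ω ^ t₀ := isPrincipal_nadd_omega0_opow t₀ (ih hA hw.le) (H _ hB hBe)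

theorem ordType_add_lt_opow_nadd_of_forall {S T : Set Γ} {a b : Ordinal} (hT : T.IsWF)
    (ih : ∀ e < a, ∀ A : Set Γ, A.IsWF → A.ordType ≤ ω ^ e → (A + T).ordType ≤ ω ^ (e ♯ b))
    (hS : S.IsWF) (hSa : S.ordType < ω ^ a) : (S + T).ordType < ω ^ (a ♯ b) := by
  rcases eq_or_ne S.ordType 0 with h0 | h0
  · rw [(ordType_eq_zero hS).1 h0, empty_add, ordType_empty]
    exact opow_pos _ omega0_pos
  have he : log ω S.ordType < a := (lt_opow_iff_log_lt one_lt_omega0 h0).1 hSa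
  refine ordType_add_lt_of_lt_opow_succ hT (fun A hA hAe => ?_) hS
    (lt_opow_succ_log_self one_lt_omega0 _)
  exact (ih _ he A hA hAe).trans_lt
    ((opow_lt_opow_iff_right one_lt_omega0).2 (nadd_lt_nadd_right he b))

theorem ordType_add_le_opow_nadd {S T : Set Γ} {a b : Ordinal} (hS : S.IsWF) (hT : T.IsWF)
    (hSa : S.ordType ≤ ω ^ a) (hTb : T.ordType ≤ ω ^ b) : (S + T).ordType ≤ ω ^ (a ♯ b) := by
  refine ordType_le_of_forall_lt (hS.add hT) ?_
  rintro _ ⟨s, hs, t, ht, rfl⟩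
  have hS' : (S ∩ Iio s).IsWF := hS.mono inter_subset_left
  have hT' : (T ∩ Iio t).IsWF := hT.mono inter_subset_left
  have hleft : (S ∩ Iio s + T).ordType < ω ^ (a ♯ b) :=
    ordType_add_lt_opow_nadd_of_forall hT
      (fun e _ A hA hAe => ordType_add_le_opow_nadd hA hT hAe hTb) hS'
      ((ordType_inter_Iio_lt hS hs).trans_le hSa)
  have hright : (S + T ∩ Iio t).ordType < ω ^ (a ♯ b) := by
    rw [add_comm, nadd_comm]
    exact ordType_add_lt_opow_nadd_of_forall hS
      (fun e _ B hB hBe => ordType_add_le_opow_nadd hB hS hBe hSa) hT'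
      ((ordType_inter_Iio_lt hT ht).trans_le hTb)
  calc ((S + T) ∩ Iio (s + t)).ordType
      ≤ (S ∩ Iio s + T ∪ (S + T ∩ Iio t)).ordType :=
        ordType_mono ((hS'.add hT).union (hS.add hT')) (add_inter_Iio_add_subset S T s t)
    _ ≤ (S ∩ Iio s + T).ordType ♯ (S + T ∩ Iio t).ordType :=
        ordType_union_le (hS'.add hT) (hS.add hT')
    _ < ω ^ (a ♯ b) := isPrincipal_nadd_omega0_opow _ hleft hright
termination_by a ♯ b
decreasing_by
  · exact nadd_lt_nadd_right ‹_› b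
  · rw [nadd_comm a]
    exact nadd_lt_nadd_right ‹_› a

theorem ordType_add_lt_opow_nadd {S T : Set Γ} {a b : Ordinal} (hS : S.IsWF) (hT : T.IsWF)
    (hSa : S.ordType < ω ^ a) (hTb : T.ordType < ω ^ succ b) :
    (S + T).ordType < ω ^ (a ♯ b) := by
  rw [add_comm, nadd_comm]
  refine ordType_add_lt_of_lt_opow_succ hS (fun B hB hBb => ?_) hT hTb
  rw [add_comm, nadd_comm]
  exact ordType_add_lt_opow_nadd_of_forall hB
    (fun e _ A hA hAe => ordType_add_le_opow_nadd hA hB hAe hBb) hS hSa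

end Set

namespace HahnSeries

section LinearOrder

variable {Γ R : Type*} [LinearOrder Γ] [Zero R]

theorem ot_eq_ordType (b : HahnSeries Γ R) : b.ot = b.support.ordType :=
  (Set.ordType_eq_orderTypeSet b.isWF_support).symm

theorem ot_lt_opow_succ_deg (b : HahnSeries Γ R) : b.ot < ω ^ succ b.deg :=
  lt_opow_succ_log_self one_lt_omega0 _

theorem deg_lt_of_ot_lt_opow {b : HahnSeries Γ R} (hb : b ≠ 0) {γ : Ordinal}
    (h : b.ot < ω ^ γ) : b.deg < γ := by
  refine (lt_opow_iff_log_lt one_lt_omega0 ?_).1 h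
  rwa [ot_eq_ordType, Ne, Set.ordType_eq_zero b.isWF_support, support_eq_empty_iff]

theorem support_truncLE (b : HahnSeries Γ R) (x : Γ) :
    (b.truncLE x).support = b.support ∩ Set.Iic x := by
  ext y
  by_cases hy : y ≤ x <;> simp [truncLE, hy]

end LinearOrder

theorem support_truncLE_mul_subset {Γ R : Type*} [AddCommGroup Γ] [LinearOrder Γ]
    [IsOrderedAddMonoid Γ] [NonUnitalNonAssocSemiring R] (b c : HahnSeries Γ R) (x : Γ)
    {v₀ : Γ} (hv₀ : ∀ v ∈ c.support, v₀ ≤ v) :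
    ((b * c).truncLE x).support ⊆ b.support ∩ Set.Iic (x - v₀) + c.support := by
  rw [support_truncLE]
  rintro y ⟨hy, hyx⟩
  obtain ⟨u, hu, v, hv, rfl⟩ := support_mul_subset hy
  exact ⟨u, ⟨hu, le_sub_iff_add_le.2 ((add_le_add_right (hv₀ v hv) u).trans hyx)⟩, v, hv, rfl⟩

end HahnSeries

namespace weaklyPrincipal

variable {Γ R : Type*} [LinearOrder Γ] [Zero R] {b : HahnSeries Γ R}

theorem ot_eq_opow_deg (hb : weaklyPrincipal b) : b.ot = ω ^ b.deg := by
  obtain ⟨α, hα⟩ := hb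
  rw [HahnSeries.deg, hα, log_opow one_lt_omega0]

theorem ne_zero (hb : weaklyPrincipal b) : b ≠ 0 := by
  rintro rfl
  have h := hb.ot_eq_opow_deg
  rw [HahnSeries.ot_eq_ordType, HahnSeries.support_zero, Set.ordType_empty] at h
  exact opow_ne_zero _ omega0_ne_zero h.symm

end weaklyPrincipal

theorem principalSeries.ordType_support_inter_Iic_lt {R : Type*} [Zero R]
    {b : HahnSeries ℝ R} (hb : principalSeries b) {y : ℝ} (hy : y < 0) :
    (b.support ∩ Set.Iic y).ordType < ω ^ b.deg := by
  obtain ⟨w, hw, hyw⟩ := exists_lt_of_lt_csSup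
    (HahnSeries.support_nonempty_iff.2 hb.1.ne_zero) (hb.2.symm ▸ hy)
  calc (b.support ∩ Set.Iic y).ordType ≤ (b.support ∩ Set.Iio w).ordType :=
        Set.ordType_mono (b.isWF_support.mono Set.inter_subset_left)
          (Set.inter_subset_inter_right _ (Set.Iic_subset_Iio.2 hyw))
    _ < b.support.ordType := Set.ordType_inter_Iio_lt b.isWF_support hw
    _ = ω ^ b.deg := by rw [← HahnSeries.ot_eq_ordType, hb.1.ot_eq_opow_deg]

theorem deg_truncLE_mul_lt_general {K : Type*} [Field K] (b c : HahnSeries ℝ K) (x : ℝ)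
    (hbp : principalSeries b) (hc0 : c ≠ 0) (hcx : ∀ y ∈ c.support, x < y) :
    (b * c).truncLE x = 0 ∨ ((b * c).truncLE x).deg < b.deg ♯ c.deg := by
  refine or_iff_not_imp_left.2 fun hd => HahnSeries.deg_lt_of_ot_lt_opow hd ?_
  have hcne := HahnSeries.support_nonempty_iff.2 hc0
  set v₀ := c.isWF_support.min hcne
  have hS : (b.support ∩ Set.Iic (x - v₀)).IsWF := b.isWF_support.mono Set.inter_subset_left
  calc ((b * c).truncLE x).ot ≤ (b.support ∩ Set.Iic (x - v₀) + c.support).ordType := by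
        rw [HahnSeries.ot_eq_ordType]
        exact Set.ordType_mono (hS.add c.isWF_support) (HahnSeries.support_truncLE_mul_subset
          b c x fun v hv => c.isWF_support.min_le hcne hv)
    _ < ω ^ (b.deg ♯ c.deg) :=
        Set.ordType_add_lt_opow_nadd hS c.isWF_support
          (hbp.ordType_support_inter_Iic_lt (sub_neg.2 (hcx v₀ (c.isWF_support.min_mem hcne))))
          (c.ot_eq_ordType ▸ c.ot_lt_opow_succ_deg)

/-- Let `b, c ∈ K((ℝ≤0))` and `x ∈ ℝ`. If `b` is principal, `c ≠ 0` and every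
element of `supp c` is `> x`, then `(b * c)_{≤ x}` is zero or
`deg ((b * c)_{≤ x}) < deg b ♯ deg c`. -/
theorem deg_truncLE_mul_lt {K : Type*} [Field K] (b c : HahnSeries ℝ K) (x : ℝ)
    (hb : ∀ y ∈ b.support, y ≤ 0) (hc : ∀ y ∈ c.support, y ≤ 0)
    (hbp : principalSeries b) (hc0 : c ≠ 0) (hcx : ∀ y ∈ c.support, x < y) :
    (b * c).truncLE x = 0 ∨ ((b * c).truncLE x).deg < b.deg ♯ c.deg :=
  deg_truncLE_mul_lt_general b c x hbp hc0 hcx
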